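/- arXiv:1902.06576 — 2 statements merged into one kernel-verified Lean document; each statement's English description precedes it below -/
import Mathlib

section
/- Let V=(Q,Δ,w) be a 1-VASS (without tests) and s ∈ Q. The configuration (s,0) is unbounded if and only if there exist a simple path π from s to some state q and a positive-weight simple cycle γ on q such that the concatenated path π·γ lifts to a run from (s,0); in particular, π and γ each have length at most |Q|. -/
namespace VASSPaper

/-- A 1-VASS (without tests): states `Q`, transition relation `delta`, integer weights `w`. -/
structure VASS (Q : Type) where
  delta : Q → Q → Prop
  w : Q → Q → ℤ

variable {Q : Type}

/-- A path is a nonempty sequence of states joined by transitions. -/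
def IsPath (V : VASS Q) : List Q → Prop
  | [] => False
  | [_] => True
  | a :: b :: l => V.delta a b ∧ IsPath V (b :: l)

/-- The weight of a path: the sum of the weights of its transitions. -/
def pathWeight (V : VASS Q) (π : List Q) : ℤ :=
  (List.zipWith V.w π π.tail).sum

/-- The counter value at position `i` of the run over `π` starting with counter `z`. -/
def counterAt (V : VASS Q) (z : ℕ) (π : List Q) (i : ℕ) : ℤ :=
  (z : ℤ) + pathWeight V (π.take (i + 1))

/-- `π` lifts to a run from counter value `z`: all counter values stay nonnegative. -/
def IsRun (V : VASS Q) (π : List Q) (z : ℕ) : Prop :=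
  IsPath V π ∧ ∀ i, i < π.length → 0 ≤ counterAt V z π i

/-- `π` goes from configuration `c` to configuration `c'`. -/
def RunFromTo (V : VASS Q) (π : List Q) (c c' : Q × ℕ) : Prop :=
  π.head? = some c.1 ∧ π.getLast? = some c'.1 ∧ (c'.2 : ℤ) = (c.2 : ℤ) + pathWeight V π

/-- `c'` is reachable from `c` (in a 1-VASS without tests every run is valid). -/
def Reaches (V : VASS Q) (c c' : Q × ℕ) : Prop :=
  ∃ π, IsRun V π c.2 ∧ RunFromTo V π c c'

/-- A configuration is unbounded if infinitely many configurations are reachable from it. -/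
def Unbounded (V : VASS Q) (c : Q × ℕ) : Prop :=
  {c' | Reaches V c c'}.Infinite

/-- The minimum weight of a (possibly empty) prefix of `π`. -/
def pmin (V : VASS Q) (π : List Q) : ℤ :=
  ((List.range (π.length + 1)).map fun i => pathWeight V (π.take i)).foldr min 0

/-- The maximum weight of a (possibly empty) suffix of `π`. -/
def smax (V : VASS Q) (π : List Q) : ℤ :=
  ((List.range (π.length + 1)).map fun i => pathWeight V (π.drop i)).foldr max 0

/-- A cycle on `q`: a path with at least one transition starting and ending at `q`. -/
def IsCycleOn (V : VASS Q) (π : List Q) (q : Q) : Prop :=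
  IsPath V π ∧ 2 ≤ π.length ∧ π.head? = some q ∧ π.getLast? = some q

/-- A simple cycle on `q`. -/
def IsSimpleCycleOn (V : VASS Q) (π : List Q) (q : Q) : Prop :=
  IsCycleOn V π q ∧ π.dropLast.Nodup

/-- `π` is dominated by `π'` (paths with the same first and last states). -/
def Dominated (V : VASS Q) (π π' : List Q) : Prop :=
  π.head? = π'.head? ∧ π.getLast? = π'.getLast? ∧
    pmin V π ≤ pmin V π' ∧ smax V π ≤ smax V π'

/-- `π` is a path from `p` to `q`. -/
def IsPQPath (V : VASS Q) (p q : Q) (π : List Q) : Prop :=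
  IsPath V π ∧ π.head? = some p ∧ π.getLast? = some q

/-- `P'` is a Pareto set for `P`: every path of `P` is dominated by some path of `P'`. -/
def ParetoFor (V : VASS Q) (P' P : Set (List Q)) : Prop :=
  ∀ π ∈ P, ∃ π' ∈ P', Dominated V π π'

/-- Concatenation of a `p`-`q` path and a `q`-`r` path, identifying the shared state. -/
def pathConcat (π π' : List Q) : List Q := π ++ π'.tail

/-!
Pumping the cycle of a lasso that lifts to a run raises the counter without bound. Conversely,
if `(s, 0)` is unbounded, some run from it gains more than `|Q| · max w` and therefore visits more
than `|Q|` states. Cutting a cycle of nonpositive weight out of a run leaves a run that ends at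
least as high, so we may assume every cycle inside the run is positive; the first repeated state
then closes a positive simple cycle after a simple path, both within the first `|Q| + 1` states.
-/

section

variable {V : VASS Q}

@[simp] lemma pathWeight_nil : pathWeight V [] = 0 := rfl

@[simp] lemma pathWeight_singleton (a : Q) : pathWeight V [a] = 0 := rfl

@[simp] lemma pathWeight_cons_cons (a b : Q) (l : List Q) :
    pathWeight V (a :: b :: l) = V.w a b + pathWeight V (b :: l) := by
  simp [pathWeight]

lemma pathWeight_append_cons (σ : List Q) (q : Q) (τ : List Q) :
    pathWeight V (σ ++ q :: τ) = pathWeight V (σ ++ [q]) + pathWeight V (q :: τ) := by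
  induction σ with
  | nil => simp
  | cons a σ ih => cases σ <;> simp_all [add_assoc]

lemma pathWeight_le_mul {W : ℤ} (hW : ∀ a b, V.w a b ≤ W) :
    ∀ ρ : List Q, pathWeight V ρ ≤ (ρ.length - 1 : ℕ) * W
  | [] | [_] => by simp
  | a :: b :: l => by
    have := pathWeight_le_mul hW (b :: l)
    simp only [pathWeight_cons_cons, List.length_cons, Nat.add_sub_cancel] at this ⊢
    push_cast
    linarith [hW a b]

lemma lt_length_of_mul_lt_pathWeight {W : ℤ} (hW : ∀ a b, V.w a b ≤ W) (hW0 : 0 ≤ W) {n : ℕ}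
    {ρ : List Q} (h : n * W < pathWeight V ρ) : n < ρ.length := by
  by_contra! hlen
  have : ((ρ.length - 1 : ℕ) : ℤ) * W ≤ n * W := by gcongr; omega
  linarith [pathWeight_le_mul hW ρ]

/-- Unlike `IsRun`, this starts from an integer counter and accepts the empty path, so that it
splits along `σ ++ q :: τ`. -/
def RunsFrom (V : VASS Q) : ℤ → List Q → Prop
  | _, [] => True
  | z, [_] => 0 ≤ z
  | z, a :: b :: l => 0 ≤ z ∧ V.delta a b ∧ RunsFrom V (z + V.w a b) (b :: l)

@[simp] lemma runsFrom_singleton (z : ℤ) (a : Q) : RunsFrom V z [a] ↔ 0 ≤ z := Iff.rfl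

@[simp] lemma runsFrom_cons_cons (z : ℤ) (a b : Q) (l : List Q) :
    RunsFrom V z (a :: b :: l) ↔ 0 ≤ z ∧ V.delta a b ∧ RunsFrom V (z + V.w a b) (b :: l) :=
  Iff.rfl

lemma RunsFrom.nonneg {z : ℤ} {a : Q} {l : List Q} (h : RunsFrom V z (a :: l)) : 0 ≤ z := by
  cases l with
  | nil => exact h
  | cons => exact h.1

lemma RunsFrom.mono {z z' : ℤ} {l : List Q} (h : RunsFrom V z l) (hz : z ≤ z') :
    RunsFrom V z' l := by
  induction l generalizing z z' with
  | nil => trivial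
  | cons a l ih =>
    cases l with
    | nil => exact h.trans hz
    | cons b l => exact ⟨h.1.trans hz, h.2.1, ih h.2.2 (by linarith)⟩

lemma RunsFrom.isPath {z : ℤ} {l : List Q} (h : RunsFrom V z l) (hl : l ≠ []) :
    IsPath V l := by
  induction l generalizing z with
  | nil => exact absurd rfl hl
  | cons a l ih =>
    cases l with
    | nil => trivial
    | cons b l => exact ⟨h.2.1, ih h.2.2 (List.cons_ne_nil _ _)⟩

lemma RunsFrom.add_pathWeight_nonneg {z : ℤ} {l : List Q} (h : RunsFrom V z l) (hl : l ≠ []) :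
    0 ≤ z + pathWeight V l := by
  induction l generalizing z with
  | nil => exact absurd rfl hl
  | cons a l ih =>
    cases l with
    | nil => simpa using h
    | cons b l =>
      have := ih h.2.2 (List.cons_ne_nil _ _)
      simp only [pathWeight_cons_cons]
      linarith

lemma runsFrom_append_cons_iff {z : ℤ} (σ : List Q) (q : Q) (τ : List Q) :
    RunsFrom V z (σ ++ q :: τ) ↔
      RunsFrom V z (σ ++ [q]) ∧ RunsFrom V (z + pathWeight V (σ ++ [q])) (q :: τ) := by
  induction σ generalizing z with
  | nil => simpa using fun h => h.nonneg
  | cons a σ ih =>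
    cases σ with
    | nil => simpa [and_assoc] using fun _ _ h => h.nonneg
    | cons b σ =>
      simp only [List.cons_append] at ih
      simp [ih, add_assoc, and_assoc]

lemma isRun_iff (l : List Q) (z : ℕ) : IsRun V l z ↔ l ≠ [] ∧ RunsFrom V z l := by
  suffices ∀ z : ℤ, (IsPath V l ∧ ∀ i < l.length, 0 ≤ z + pathWeight V (l.take (i + 1))) ↔
      l ≠ [] ∧ RunsFrom V z l from this z
  induction l with
  | nil => simp [IsPath]
  | cons a l ih =>
    cases l with
    | nil => simp [IsPath]
    | cons b l =>
      intro z
      have h := ih (z + V.w a b)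
      simp only [ne_eq, reduceCtorEq, not_false_eq_true, true_and] at h ⊢
      rw [runsFrom_cons_cons, ← h, IsPath, List.length_cons, Nat.forall_lt_succ_left]
      simp [List.take_succ_cons, add_assoc]
      tauto

lemma pathWeight_append_cycle (α β τ : List Q) (q : Q) :
    pathWeight V (α ++ q :: β ++ q :: τ) =
      pathWeight V (α ++ q :: τ) + pathWeight V (q :: β ++ [q]) := by
  rw [pathWeight_append_cons (α ++ q :: β), List.append_assoc, List.cons_append,
    pathWeight_append_cons α q (β ++ [q]), pathWeight_append_cons α q τ]
  ring

lemma RunsFrom.cut_cycle {z : ℤ} {α β τ : List Q} {q : Q}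
    (h : RunsFrom V z (α ++ q :: β ++ q :: τ)) (hc : pathWeight V (q :: β ++ [q]) ≤ 0) :
    RunsFrom V z (α ++ q :: τ) := by
  rw [runsFrom_append_cons_iff (α ++ q :: β), List.append_assoc, List.cons_append,
    runsFrom_append_cons_iff α q (β ++ [q])] at h
  rw [runsFrom_append_cons_iff α q τ]
  refine ⟨h.1.1, h.2.mono ?_⟩
  rw [pathWeight_append_cons α q (β ++ [q])]
  exact add_le_add_right (add_le_of_nonpos_right hc) z

def AllCyclesPositive (V : VASS Q) (ρ : List Q) : Prop :=
  ∀ α β τ q, ρ = α ++ q :: β ++ q :: τ → 0 < pathWeight V (q :: β ++ [q])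

lemma RunsFrom.exists_allCyclesPositive {z : ℤ} {ρ : List Q} (hρ : RunsFrom V z ρ) :
    ∃ ρ', RunsFrom V z ρ' ∧ ρ'.head? = ρ.head? ∧ pathWeight V ρ ≤ pathWeight V ρ' ∧
      AllCyclesPositive V ρ' := by
  induction hn : ρ.length using Nat.strong_induction_on generalizing ρ with
  | _ n ih =>
    by_cases hpos : AllCyclesPositive V ρ
    · exact ⟨ρ, hρ, rfl, le_rfl, hpos⟩
    obtain ⟨α, β, τ, q, rfl, hc⟩ : ∃ α β τ q, ρ = α ++ q :: β ++ q :: τ ∧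
        pathWeight V (q :: β ++ [q]) ≤ 0 := by
      simpa [AllCyclesPositive] using hpos
    obtain ⟨ρ', hρ', hhead, hw, hpos'⟩ :=
      ih _ (by simp [← hn]) (hρ.cut_cycle hc) rfl
    refine ⟨ρ', hρ', ?_, ?_, hpos'⟩
    · rw [hhead]; cases α <;> simp
    · rw [pathWeight_append_cycle]; linarith

lemma _root_.List.exists_eq_append_cons_append_cons_of_not_nodup {α : Type*} {l : List α}
    (h : ¬ l.Nodup) : ∃ u v w x, l = u ++ x :: v ++ x :: w ∧ (u ++ x :: v).Nodup := by
  induction l using List.reverseRecOn with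
  | nil => simp at h
  | append_singleton l y ih =>
    by_cases hl : l.Nodup
    · have hy : y ∈ l := by
        by_contra hy
        exact h (List.concat_eq_append .. ▸ (List.nodup_concat _ _).mpr ⟨hy, hl⟩)
      obtain ⟨u, v, rfl⟩ := List.append_of_mem hy
      exact ⟨u, v, [], y, by simp, hl⟩
    · obtain ⟨u, v, w, x, rfl, hnd⟩ := ih hl
      exact ⟨u, v, w ++ [y], x, by simp, hnd⟩

lemma exists_lasso_of_allCyclesPositive [Fintype Q] {s : Q} {ρ : List Q}
    (hρ : RunsFrom V 0 ρ) (hs : ρ.head? = some s) (hlen : Fintype.card Q < ρ.length)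
    (hpos : AllCyclesPositive V ρ) :
    ∃ (q : Q) (π γc : List Q),
      IsPath V π ∧ π.Nodup ∧ π.head? = some s ∧ π.getLast? = some q ∧
      IsSimpleCycleOn V γc q ∧ 0 < pathWeight V γc ∧
      IsRun V (pathConcat π γc) 0 ∧
      π.length ≤ Fintype.card Q + 1 ∧ γc.length ≤ Fintype.card Q + 1 := by
  obtain ⟨u, v, w, x, rfl, hnd⟩ := List.exists_eq_append_cons_append_cons_of_not_nodup
    fun h => hlen.not_ge h.length_le_card
  have hlasso : RunsFrom V 0 (u ++ x :: v ++ [x]) :=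
    ((runsFrom_append_cons_iff (u ++ x :: v) x w).mp hρ).1
  obtain ⟨hπ, hγ⟩ := (runsFrom_append_cons_iff u x (v ++ [x])).mp (by simpa using hlasso)
  have hcard := hnd.length_le_card
  simp only [List.length_append, List.length_cons] at hcard
  refine ⟨x, u ++ [x], x :: v ++ [x], hπ.isPath (by simp), hnd.sublist (by simp), ?_, by simp,
    ⟨⟨hγ.isPath (by simp), by simp, by simp, List.getLast?_concat⟩, ?_⟩, hpos u v w x rfl,
    (isRun_iff _ 0).mpr ⟨by simp [pathConcat], by simpa [pathConcat] using hlasso⟩,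
    by simp; omega, by simp; omega⟩
  · simpa [List.head?_append] using hs
  · rw [List.dropLast_concat]
    exact hnd.sublist (List.sublist_append_right u _)

lemma IsCycleOn.exists_eq_cons_append {γ : List Q} {q : Q} (h : IsCycleOn V γ q) :
    ∃ β, γ = q :: β ++ [q] := by
  obtain ⟨-, hlen, hh, hl⟩ := h
  rcases γ with _ | ⟨a, _ | ⟨b, γ⟩⟩
  · simp at hlen
  · simp at hlen
  obtain rfl : a = q := by simpa using hh
  obtain ⟨β, hβ⟩ := List.getLast?_eq_some_iff.mp
    (show (b :: γ).getLast? = some a by simpa [List.getLast?_cons_cons] using hl)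
  exact ⟨β, by rw [List.cons_append, ← hβ]⟩

lemma RunsFrom.pump {z : ℤ} {α β : List Q} {q : Q} (h : RunsFrom V z (α ++ q :: β ++ [q]))
    (hc : 0 ≤ pathWeight V (q :: β ++ [q])) (k : ℕ) :
    ∃ α', RunsFrom V z (α' ++ [q]) ∧ (α' ++ [q]).head? = (α ++ [q]).head? ∧
      pathWeight V (α' ++ [q]) = pathWeight V (α ++ [q]) + k * pathWeight V (q :: β ++ [q]) := by
  obtain ⟨hα, hcyc⟩ := (runsFrom_append_cons_iff α q (β ++ [q])).mp (by simpa using h)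
  induction k with
  | zero => exact ⟨α, hα, rfl, by simp⟩
  | succ k ih =>
    obtain ⟨α', hα', hhead, hw⟩ := ih
    refine ⟨α' ++ q :: β, ?_, ?_, ?_⟩
    · rw [List.append_assoc, List.cons_append, runsFrom_append_cons_iff]
      exact ⟨hα', hcyc.mono (by rw [hw]; nlinarith)⟩
    · rw [← hhead]; cases α' <;> simp
    · rw [List.append_assoc, List.cons_append, pathWeight_append_cons, hw, ← List.cons_append]
      push_cast
      ring

lemma Unbounded.exists_reaches_lt [Finite Q] {c : Q × ℕ} (h : Unbounded V c) (N : ℕ) :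
    ∃ c', Reaches V c c' ∧ N < c'.2 := by
  by_contra! hN
  exact h ((Set.finite_univ.prod (Set.finite_Iic N)).subset fun c' hc' => ⟨trivial, hN c' hc'⟩)

lemma unbounded_of_forall_exists_reaches_lt {c : Q × ℕ}
    (h : ∀ N : ℕ, ∃ c', Reaches V c c' ∧ N < c'.2) : Unbounded V c := by
  intro hfin
  obtain ⟨N, hN⟩ := (hfin.image Prod.snd).bddAbove
  obtain ⟨c', hc', hlt⟩ := h N
  exact hlt.not_ge (hN ⟨c', hc', rfl⟩)

lemma reaches_of_runsFrom {z : ℕ} {ρ : List Q} {s q : Q} (h : RunsFrom V z ρ)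
    (hs : ρ.head? = some s) (hq : ρ.getLast? = some q) :
    Reaches V (s, z) (q, (z + pathWeight V ρ).toNat) := by
  have hne : ρ ≠ [] := by rintro rfl; simp at hs
  exact ⟨ρ, (isRun_iff ρ z).mpr ⟨hne, h⟩, hs, hq,
    Int.toNat_of_nonneg (h.add_pathWeight_nonneg hne)⟩

lemma unbounded_of_runsFrom_lasso {z : ℕ} {α β : List Q} {s q : Q}
    (h : RunsFrom V z (α ++ q :: β ++ [q])) (hs : (α ++ [q]).head? = some s)
    (hc : 0 < pathWeight V (q :: β ++ [q])) : Unbounded V (s, z) := by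
  refine unbounded_of_forall_exists_reaches_lt fun N => ?_
  obtain ⟨α', hα', hhead, hw⟩ := h.pump hc.le (N + 1)
  refine ⟨_, reaches_of_runsFrom hα' (hhead.trans hs) List.getLast?_concat, ?_⟩
  have hα := ((runsFrom_append_cons_iff α q (β ++ [q])).mp (by simpa using h)).1
  have := hα.add_pathWeight_nonneg (by simp)
  rw [hw, Int.lt_toNat]
  push_cast
  nlinarith

end

/-- in a 1-VASS without tests, `(s,0)` is unbounded iff some lasso (a simple path
followed by a positive-weight simple cycle, each of length at most `|Q|`) lifts to a run
from `(s,0)`. -/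
theorem unbounded_iff_lasso
    {Q : Type} [Fintype Q] (V : VASS Q) (s : Q) :
    Unbounded V (s, 0) ↔
      ∃ (q : Q) (π γc : List Q),
        IsPath V π ∧ π.Nodup ∧ π.head? = some s ∧ π.getLast? = some q ∧
        IsSimpleCycleOn V γc q ∧ 0 < pathWeight V γc ∧
        IsRun V (pathConcat π γc) 0 ∧
        π.length ≤ Fintype.card Q + 1 ∧ γc.length ≤ Fintype.card Q + 1 := by
  constructor
  · intro hU
    obtain ⟨W, hW⟩ := Finite.exists_le fun p : Q × Q => (V.w p.1 p.2).toNat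
    obtain ⟨⟨q, n⟩, ⟨ρ, hρ, hs, -, hn⟩, hlt⟩ := hU.exists_reaches_lt (Fintype.card Q * W)
    obtain ⟨-, hρ⟩ := (isRun_iff ρ 0).mp hρ
    simp only [Nat.cast_zero, zero_add] at hρ hn hlt
    obtain ⟨ρ', hρ', hs', hw', hpos⟩ := hρ.exists_allCyclesPositive
    have hlong : Fintype.card Q * (W : ℤ) < pathWeight V ρ' := by
      have : ((Fintype.card Q * W : ℕ) : ℤ) < n := by exact_mod_cast hlt
      push_cast at this
      linarith
    refine exists_lasso_of_allCyclesPositive hρ' (hs'.trans hs) ?_ hpos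
    exact lt_length_of_mul_lt_pathWeight
      (fun a b => (Int.self_le_toNat _).trans (Nat.cast_le.mpr (hW (a, b)))) W.cast_nonneg hlong
  · rintro ⟨q, π, γc, -, -, hs, hq, hγ, hpos, hrun, -, -⟩
    obtain ⟨α, rfl⟩ := List.getLast?_eq_some_iff.mp hq
    obtain ⟨β, rfl⟩ := hγ.1.exists_eq_cons_append
    have hlasso := ((isRun_iff _ 0).mp hrun).2
    exact unbounded_of_runsFrom_lasso (by simpa [pathConcat] using hlasso) hs hpos

end VASSPaper
end

section
/- Let p,q,r be states of a 1-VASS, let P be a set of p-q paths with Pareto set P', and let R be a set of q-r paths with Pareto set R'. Then P'·R' := {π·π' : π ∈ P', π' ∈ R'} is a Pareto set for P·R := {π·π' : π ∈ P, π' ∈ R}. -/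
/-! The prefix weights of a path are the prefix sums of its sequence of transition weights, and the
transition weights of `π·ρ` are those of `π` followed by those of `ρ`. So the prefix weights of
`π·ρ` are those of `π` together with `w(π)` plus those of `ρ`, giving
`pmin (π·ρ) = min (pmin π) (w π + pmin ρ)`. Every suffix is the complement of a prefix, so
`smax = w - pmin` and `smax (π·ρ) = max (smax ρ) (w ρ + smax π)`. Both expressions are monotone in
the data of the factors, and `w = pmin + smax` is monotone under domination, so domination passes
to concatenations. -/

namespace List

theorem isLeast_foldr_min {α : Type*} [LinearOrder α] (l : List α) (a : α) :
    IsLeast {x | x = a ∨ x ∈ l} (l.foldr min a) := by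
  induction l with
  | nil => simp [isLeast_singleton]
  | cons b l ih =>
    have hset : {x | x = a ∨ x ∈ b :: l} = {b} ∪ {x | x = a ∨ x ∈ l} := by
      ext x
      simp only [mem_cons, Set.mem_ofPred_eq, Set.mem_union, Set.mem_singleton_iff]
      tauto
    rw [hset, foldr_cons]
    exact isLeast_singleton.union ih

theorem isGreatest_foldr_max {α : Type*} [LinearOrder α] (l : List α) (a : α) :
    IsGreatest {x | x = a ∨ x ∈ l} (l.foldr max a) :=
  isLeast_foldr_min (α := αᵒᵈ) l a

section PrefixSums

variable {α : Type*}

def prefixSums [AddMonoid α] (l : List α) : Set α := Set.range fun k => (l.take k).sum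

def suffixSums [AddMonoid α] (l : List α) : Set α := Set.range fun k => (l.drop k).sum

theorem suffixSums_eq_image_prefixSums [AddCommGroup α] (l : List α) :
    l.suffixSums = (l.sum - ·) '' l.prefixSums := by
  rw [prefixSums, ← Set.range_comp, suffixSums]
  congr 1
  funext k
  rw [Function.comp_apply, ← l.sum_take_add_sum_drop k, add_sub_cancel_left]

theorem prefixSums_append [AddMonoid α] (l m : List α) :
    (l ++ m).prefixSums = l.prefixSums ∪ (l.sum + ·) '' m.prefixSums := by
  apply Set.Subset.antisymm
  · rintro _ ⟨k, rfl⟩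
    rcases le_total k l.length with hk | hk
    · left
      exact ⟨k, by simp [take_append, Nat.sub_eq_zero_of_le hk]⟩
    · right
      exact ⟨_, ⟨k - l.length, rfl⟩, by simp [take_append, take_of_length_le hk]⟩
  · rintro _ (⟨k, rfl⟩ | ⟨_, ⟨j, rfl⟩, rfl⟩)
    · refine ⟨min k l.length, ?_⟩
      simp [take_append, take_eq_take_min (l := l) (i := k)]
    · exact ⟨l.length + j, by simp [take_append, take_of_length_le]⟩

theorem isLeast_prefixSums_append [AddCommMonoid α] [LinearOrder α] [IsOrderedAddMonoid α]
    {l m : List α} {a b : α} (hl : IsLeast l.prefixSums a) (hm : IsLeast m.prefixSums b) : IsLeast (l ++ m).prefixSums (min a (l.sum + b)) :=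
  prefixSums_append l m ▸ hl.union ((monotone_id.const_add l.sum).map_isLeast hm)

end PrefixSums

end List

namespace VASSPaper

section

variable {Q : Type} (V : VASS Q)

def edgeWeights (π : List Q) : List ℤ := List.zipWith V.w π π.tail

@[simp]
theorem sum_edgeWeights (π : List Q) : (edgeWeights V π).sum = pathWeight V π := rfl

@[simp]
theorem length_edgeWeights (π : List Q) : (edgeWeights V π).length = π.length - 1 := by
  simp [edgeWeights]

theorem edgeWeights_take_add_one (π : List Q) (i : ℕ) :
    edgeWeights V (π.take (i + 1)) = (edgeWeights V π).take i := by
  induction π generalizing i with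
  | nil => simp [edgeWeights]
  | cons a l ih =>
    cases l with
    | nil => simp [edgeWeights]
    | cons b l =>
      cases i with
      | zero => simp [edgeWeights]
      | succ i => simpa [edgeWeights] using ih i

theorem edgeWeights_drop (π : List Q) (i : ℕ) :
    edgeWeights V (π.drop i) = (edgeWeights V π).drop i := by
  simp [edgeWeights, List.drop_zipWith, List.tail_drop, List.drop_tail]

theorem edgeWeights_append_cons (l t : List Q) (x : Q) :
    edgeWeights V (l ++ x :: t) = edgeWeights V (l ++ [x]) ++ edgeWeights V (x :: t) := by
  induction l with
  | nil => simp [edgeWeights]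
  | cons a l ih =>
    cases l with
    | nil => simp [edgeWeights]
    | cons b l => simpa [edgeWeights] using ih

theorem edgeWeights_pathConcat {π ρ : List Q} (h : π.getLast? = ρ.head?) :
    edgeWeights V (pathConcat π ρ) = edgeWeights V π ++ edgeWeights V ρ := by
  cases ρ with
  | nil =>
    obtain rfl : π = [] := by simpa using h
    rfl
  | cons x t =>
    obtain ⟨l, rfl⟩ := List.getLast?_eq_some_iff.1 h
    simpa [pathConcat] using edgeWeights_append_cons V l t x

theorem isLeast_pmin (π : List Q) : IsLeast (edgeWeights V π).prefixSums (pmin V π) := by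
  have hset : (edgeWeights V π).prefixSums =
      {x | x = 0 ∨ x ∈ (List.range (π.length + 1)).map fun i => pathWeight V (π.take i)} := by
    ext x
    simp only [List.prefixSums, Set.mem_range, List.mem_map, List.mem_range, Set.mem_ofPred_eq]
    constructor
    · rintro ⟨k, rfl⟩
      right
      rcases lt_or_ge k π.length with hk | hk
      · exact ⟨k + 1, by omega, by rw [← sum_edgeWeights, edgeWeights_take_add_one]⟩
      · refine ⟨π.length, by omega, ?_⟩
        rw [List.take_length, ← sum_edgeWeights, List.take_of_length_le (by simp; omega)]
    · rintro (rfl | ⟨_ | k, -, rfl⟩)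
      · exact ⟨0, rfl⟩
      · exact ⟨0, rfl⟩
      · exact ⟨k, by rw [← sum_edgeWeights, edgeWeights_take_add_one]⟩
  rw [hset]
  exact List.isLeast_foldr_min _ 0

theorem isGreatest_smax (π : List Q) :
    IsGreatest (edgeWeights V π).suffixSums (smax V π) := by
  have hset : (edgeWeights V π).suffixSums =
      {x | x = 0 ∨ x ∈ (List.range (π.length + 1)).map fun i => pathWeight V (π.drop i)} := by
    ext x
    simp only [List.suffixSums, Set.mem_range, List.mem_map, List.mem_range, Set.mem_ofPred_eq]
    constructor
    · rintro ⟨k, rfl⟩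
      rcases le_or_gt k π.length with hk | hk
      · exact Or.inr ⟨k, by omega, by rw [← sum_edgeWeights, edgeWeights_drop]⟩
      · left
        rw [List.drop_of_length_le (by simp; omega), List.sum_nil]
    · rintro (rfl | ⟨i, -, rfl⟩)
      · exact ⟨π.length, by rw [List.drop_of_length_le (by simp), List.sum_nil]⟩
      · exact ⟨i, by rw [← sum_edgeWeights, edgeWeights_drop]⟩
  rw [hset]
  exact List.isGreatest_foldr_max _ 0

theorem smax_eq_pathWeight_sub_pmin (π : List Q) : smax V π = pathWeight V π - pmin V π := by
  refine (isGreatest_smax V π).unique ?_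
  rw [List.suffixSums_eq_image_prefixSums, sum_edgeWeights]
  exact Antitone.map_isLeast (fun _ _ hle => sub_le_sub_left hle _) (isLeast_pmin V π)

section Concat

variable {π ρ : List Q}

theorem pathWeight_pathConcat (h : π.getLast? = ρ.head?) :
    pathWeight V (pathConcat π ρ) = pathWeight V π + pathWeight V ρ := by
  rw [← sum_edgeWeights, edgeWeights_pathConcat V h, List.sum_append, sum_edgeWeights,
    sum_edgeWeights]

theorem pmin_pathConcat (h : π.getLast? = ρ.head?) :
    pmin V (pathConcat π ρ) = min (pmin V π) (pathWeight V π + pmin V ρ) := by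
  refine (isLeast_pmin V _).unique ?_
  rw [edgeWeights_pathConcat V h, ← sum_edgeWeights]
  exact List.isLeast_prefixSums_append (isLeast_pmin V π) (isLeast_pmin V ρ)

theorem smax_pathConcat (h : π.getLast? = ρ.head?) :
    smax V (pathConcat π ρ) = max (smax V ρ) (pathWeight V ρ + smax V π) := by
  simp only [smax_eq_pathWeight_sub_pmin, pmin_pathConcat V h, pathWeight_pathConcat V h]
  omega

theorem head?_pathConcat (h : π.getLast? = ρ.head?) : (pathConcat π ρ).head? = π.head? := by
  cases π with
  | nil =>
    obtain rfl : ρ = [] := by simpa [eq_comm] using h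
    rfl
  | cons a l => rfl

theorem getLast?_pathConcat (h : π.getLast? = ρ.head?) :
    (pathConcat π ρ).getLast? = ρ.getLast? := by
  cases ρ with
  | nil =>
    obtain rfl : π = [] := by simpa using h
    rfl
  | cons x t => simp [pathConcat, List.getLast?_append, List.getLast?_cons, h]

end Concat

variable {V} {π π' ρ ρ' : List Q}

theorem Dominated.pathWeight_le (h : Dominated V π π') : pathWeight V π ≤ pathWeight V π' := by
  obtain ⟨-, -, hpmin, hsmax⟩ := h
  rw [smax_eq_pathWeight_sub_pmin, smax_eq_pathWeight_sub_pmin] at hsmax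
  omega

theorem Dominated.pathConcat (hπ : Dominated V π π') (hρ : Dominated V ρ ρ')
    (h : π.getLast? = ρ.head?) : Dominated V (pathConcat π ρ) (pathConcat π' ρ') := by
  have h' : π'.getLast? = ρ'.head? := hπ.2.1.symm.trans (h.trans hρ.1)
  have hwπ := hπ.pathWeight_le
  have hwρ := hρ.pathWeight_le
  obtain ⟨hhead, -, hpmin, hsmax⟩ := hπ
  obtain ⟨-, hlast, hpmin', hsmax'⟩ := hρ
  refine ⟨?_, ?_, ?_, ?_⟩
  · rw [head?_pathConcat h, head?_pathConcat h', hhead]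
  · rw [getLast?_pathConcat h, getLast?_pathConcat h', hlast]
  · rw [pmin_pathConcat V h, pmin_pathConcat V h']
    omega
  · rw [smax_pathConcat V h, smax_pathConcat V h']
    omega

end

theorem paretoFor_concat_general
    {Q : Type} (V : VASS Q) (p q r : Q) (P P' R R' : Set (List Q))
    (hP : ∀ π ∈ P, IsPQPath V p q π) (hR : ∀ π ∈ R, IsPQPath V q r π)
    (h1 : ParetoFor V P' P) (h2 : ParetoFor V R' R) :
    ParetoFor V (Set.image2 pathConcat P' R') (Set.image2 pathConcat P R) := by
  rintro _ ⟨π, hπ, ρ, hρ, rfl⟩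
  obtain ⟨π', hπ', hππ'⟩ := h1 π hπ
  obtain ⟨ρ', hρ', hρρ'⟩ := h2 ρ hρ
  exact ⟨_, Set.mem_image2_of_mem hπ' hρ',
    hππ'.pathConcat hρρ' ((hP π hπ).2.2.trans (hR ρ hρ).2.1.symm)⟩

/-- concatenation of Pareto sets is a Pareto set for the concatenation. -/
theorem paretoFor_concat
    {Q : Type} (V : VASS Q) (p q r : Q) (P P' R R' : Set (List Q))
    (hP : ∀ π ∈ P, IsPQPath V p q π) (hR : ∀ π ∈ R, IsPQPath V q r π)
    (hP' : ∀ π ∈ P', IsPQPath V p q π) (hR' : ∀ π ∈ R', IsPQPath V q r π)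
    (h1 : ParetoFor V P' P) (h2 : ParetoFor V R' R) :
    ParetoFor V (Set.image2 pathConcat P' R') (Set.image2 pathConcat P R) :=
  paretoFor_concat_general V p q r P P' R R' hP hR h1 h2

end VASSPaper
end
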